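/- Let G be the graph on 17 vertices {z, y_0, y_1, …, y_15} whose edges are: z y_i for all i ∈ {0,…,15}; y_i y_{i+1 mod 16} for all i ∈ {0,…,15}; y_i y_{i+2 mod 16} for all even i ∈ {0,…,15}; and y_i y_{i+4 mod 16} for all i ∈ {0,…,15} divisible by 4. Then G is a simple planar graph with minimum degree at least 3 and maximum degree 16, and G is positively curved, i.e., κ_LLY(u,v) > 0 for every edge uv of G. -/

import Mathlib

open Filter Set

variable {V : Type*}

-- The `α`-lazy random walk distribution at vertex `x`.
open Classical in
noncomputable def lazyWalk (G : SimpleGraph V) [G.LocallyFinite] (α : ℝ) (x : V) : V → ℝ :=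
  fun v => if v = x then α else if G.Adj x v then (1 - α) / (G.degree x : ℝ) else 0

/-- `A` is a coupling between the finitely supported distributions `m₁` and `m₂`. -/
def IsCoupling (m₁ m₂ : V → ℝ) (A : V → V → ℝ) : Prop :=
  (Function.support fun p : V × V => A p.1 p.2).Finite ∧
  (∀ x y, 0 ≤ A x y ∧ A x y ≤ 1) ∧
  (∀ x, ∑ᶠ y, A x y = m₁ x) ∧
  (∀ y, ∑ᶠ x, A x y = m₂ y)

/-- The transportation (Wasserstein) distance between two distributions on `V`,
with respect to the graph distance of `G`. -/
noncomputable def transportDist (G : SimpleGraph V) (m₁ m₂ : V → ℝ) : ℝ :=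
  sInf {w : ℝ | ∃ A : V → V → ℝ, IsCoupling m₁ m₂ A ∧
    w = ∑ᶠ p : V × V, A p.1 p.2 * (G.dist p.1 p.2 : ℝ)}

/-- The `α`-Ricci curvature `κ_α(x,y)`. -/
noncomputable def alphaRicci (G : SimpleGraph V) [G.LocallyFinite] (α : ℝ) (x y : V) : ℝ :=
  1 - transportDist G (lazyWalk G α x) (lazyWalk G α y) / (G.dist x y : ℝ)

/-- `κ` is the Lin–Lu–Yau Ricci curvature of the pair `(x,y)`:
the limit of `κ_α(x,y)/(1-α)` as `α → 1⁻`. -/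
def HasLLYCurv (G : SimpleGraph V) [G.LocallyFinite] (x y : V) (κ : ℝ) : Prop :=
  Tendsto (fun α : ℝ => alphaRicci G α x y / (1 - α)) (nhdsWithin 1 (Set.Iio 1)) (nhds κ)

/-- `G` is positively curved: every edge has positive Lin–Lu–Yau Ricci curvature. -/
def PositivelyCurved (G : SimpleGraph V) [G.LocallyFinite] : Prop :=
  ∀ ⦃x y : V⦄, G.Adj x y → ∃ κ : ℝ, 0 < κ ∧ HasLLYCurv G x y κ

/-- `G` is planar: it admits a topological embedding in the plane, i.e. an injective
placement of the vertices together with arcs for the edges, where arcs are injective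
continuous curves joining the endpoints, not passing through any other vertex, and
two arcs of distinct edges meet only in common endpoints. -/
def IsPlanar (G : SimpleGraph V) : Prop :=
  ∃ (f : V → ℝ × ℝ) (e : ∀ u v : V, G.Adj u v → Set.Icc (0:ℝ) 1 → ℝ × ℝ),
    Function.Injective f ∧
    (∀ u v (h : G.Adj u v), Continuous (e u v h)) ∧
    (∀ u v (h : G.Adj u v), Function.Injective (e u v h)) ∧
    (∀ u v (h : G.Adj u v),
      e u v h ⟨0, Set.left_mem_Icc.mpr zero_le_one⟩ = f u ∧
      e u v h ⟨1, Set.right_mem_Icc.mpr zero_le_one⟩ = f v) ∧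
    (∀ u v (h : G.Adj u v) (w : V), w ≠ u → w ≠ v → f w ∉ Set.range (e u v h)) ∧
    (∀ u v (h : G.Adj u v) (u' v' : V) (h' : G.Adj u' v'), ({u, v} : Set V) ≠ {u', v'} →
      Set.range (e u v h) ∩ Set.range (e u' v' h') ⊆ (f '' {u, v}) ∩ (f '' {u', v'}))

/-- The planar graph on 17 vertices `{z} ∪ {y_i : i ∈ ZMod 16}` (with `z = none` and
`y_i = some i`): edges are `z y_i` for all `i`, `y_i y_{i+1}` for all `i`,
`y_i y_{i+2}` for even `i`, and `y_i y_{i+4}` for `i` divisible by `4`. -/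
def extremalGraph : SimpleGraph (Option (ZMod 16)) :=
  SimpleGraph.fromRel fun u w =>
    (u = none ∧ w ≠ none) ∨
    (∃ i : ZMod 16, u = some i ∧ w = some (i + 1)) ∨
    (∃ i : ZMod 16, i.val % 2 = 0 ∧ u = some i ∧ w = some (i + 2)) ∨
    (∃ i : ZMod 16, i.val % 4 = 0 ∧ u = some i ∧ w = some (i + 4))

noncomputable instance : extremalGraph.LocallyFinite := fun _ => Fintype.ofFinite _

/-!
Planarity: put `z` at the origin and the `yᵢ` at explicit integer points and draw every edge as a
straight segment. Such a drawing is an embedding as soon as no vertex lies on the line through an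
edge it does not belong to, and of any two disjoint edges one lies strictly on one side of the line
through the other; these are sign conditions on integer orientation determinants, checked by
computation.

Curvature: write `m_xᵅ = α δ_x + (1 - α) m_x⁰`. If `π` is a signed coupling of `m_x⁰` and `m_y⁰`
that is negative only at `(x, y)`, then `α δ_(x,y) + (1 - α) π` couples `m_xᵅ` and `m_yᵅ` for `α`
close to `1`, at cost `α + (1 - α) c` with `c = Σ π d`. A `1`-Lipschitz `f` with `f x - f y = 1` and
`Σ f (m_x⁰ - m_y⁰) = c` shows by weak Kantorovich duality that this is optimal, so
`κ_α = (1 - α)(1 - c)` near `1` and `κ_LLY(x, y) = 1 - c`. The maps `yᵢ ↦ y_{±i + 4k}` are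
automorphisms, and up to them and reversal there are seven edges; for each, a rational `π` and `f`
with `c < 1` are verified by computation.
-/

open Finset Topology

section Orientation

variable {R : Type*} [CommRing R]

def orientation (p q r : R × R) : R :=
  (q.1 - p.1) * (r.2 - p.2) - (q.2 - p.2) * (r.1 - p.1)

def SegmentsSeparated [LinearOrder R] (p q r s : R × R) : Prop :=
  0 < orientation p q r * orientation p q s ∨ 0 < orientation r s p * orientation r s q

instance [LinearOrder R] (p q r s : R × R) : Decidable (SegmentsSeparated p q r s) := by
  unfold SegmentsSeparated; infer_instance

@[simp] lemma orientation_self_left (p q : R × R) : orientation p q p = 0 := by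
  simp only [orientation]; ring

@[simp] lemma orientation_self_right (p q : R × R) : orientation p q q = 0 := by
  simp only [orientation]; ring

lemma orientation_add_smul (p q a b : R × R) {s t : R} (hst : s + t = 1) :
    orientation p q (s • a + t • b) = s * orientation p q a + t * orientation p q b := by
  simp only [orientation, Prod.fst_add, Prod.snd_add, Prod.smul_fst, Prod.smul_snd, smul_eq_mul]
  linear_combination ((q.1 - p.1) * p.2 - (q.2 - p.2) * p.1) * hst

lemma orientation_eq_zero_of_mem_segment {p q x : ℝ × ℝ} (hx : x ∈ segment ℝ p q) :
    orientation p q x = 0 := by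
  obtain ⟨s, t, -, -, hst, rfl⟩ := hx
  simp [orientation_add_smul p q p q hst]

lemma disjoint_segment_of_orientation_mul_pos {p q r s : ℝ × ℝ}
    (h : 0 < orientation p q r * orientation p q s) : Disjoint (segment ℝ p q) (segment ℝ r s) := by
  rw [Set.disjoint_left]
  rintro _ hpq ⟨a, b, ha, hb, hab, rfl⟩
  have h0 := orientation_eq_zero_of_mem_segment hpq
  rw [orientation_add_smul p q r s hab] at h0
  have key : a * orientation p q r ^ 2 + b * (orientation p q r * orientation p q s) = 0 := by
    linear_combination orientation p q r * h0
  have hb0 : b = 0 := by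
    nlinarith [mul_nonneg ha (sq_nonneg (orientation p q r)), mul_nonneg hb h.le]
  have hr : orientation p q r = 0 := by
    simpa [hb0, show a = 1 by linarith] using key
  simp [hr] at h

lemma SegmentsSeparated.disjoint {p q r s : ℝ × ℝ} (h : SegmentsSeparated p q r s) :
    Disjoint (segment ℝ p q) (segment ℝ r s) :=
  h.elim disjoint_segment_of_orientation_mul_pos
    fun h ↦ (disjoint_segment_of_orientation_mul_pos h).symm

lemma segment_inter_segment_subset {s p p' : ℝ × ℝ} (h : orientation s p p' ≠ 0) :
    segment ℝ s p ∩ segment ℝ s p' ⊆ {s} := by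
  rintro _ ⟨hp, a, b, -, -, hab, rfl⟩
  have h0 := orientation_eq_zero_of_mem_segment hp
  rw [orientation_add_smul s p s p' hab] at h0
  have hb : b = 0 := by
    simpa [h] using h0
  simp [hb, show a = 1 by linarith]

def castPoint (p : ℤ × ℤ) : ℝ × ℝ := (p.1, p.2)

lemma castPoint_injective : Function.Injective castPoint := fun p q h ↦ by
  simp only [castPoint, Prod.mk.injEq, Int.cast_inj] at h
  exact Prod.ext h.1 h.2

lemma orientation_castPoint (p q r : ℤ × ℤ) :
    orientation (castPoint p) (castPoint q) (castPoint r) = orientation p q r := by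
  simp [orientation, castPoint]

lemma SegmentsSeparated.castPoint {p q r s : ℤ × ℤ} (h : SegmentsSeparated p q r s) :
    SegmentsSeparated (castPoint p) (castPoint q) (castPoint r) (castPoint s) := by
  simp only [SegmentsSeparated, orientation_castPoint]
  exact_mod_cast h

end Orientation

theorem isPlanar_of_straightLineDrawing (G : SimpleGraph V) (p : V → ℝ × ℝ)
    (hp : Function.Injective p)
    (hoff : ∀ ⦃u v⦄, G.Adj u v → ∀ w, w ≠ u → w ≠ v → orientation (p u) (p v) (p w) ≠ 0)
    (hsep : ∀ ⦃u v⦄, G.Adj u v → ∀ ⦃u' v'⦄, G.Adj u' v' → u ≠ u' → u ≠ v' → v ≠ u' → v ≠ v' →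
      SegmentsSeparated (p u) (p v) (p u') (p v')) :
    IsPlanar G := by
  refine ⟨p, fun u v _ ↦ Path.segment (p u) (p v), hp, fun _ _ _ ↦ (Path.segment _ _).continuous,
    fun _ _ h ↦ Path.segment_injective_of_ne (hp.ne h.ne),
    fun _ _ _ ↦ ⟨(Path.segment _ _).source, (Path.segment _ _).target⟩, ?_, ?_⟩
  · intro u v h w hwu hwv hw
    rw [Path.range_segment] at hw
    exact hoff h w hwu hwv (orientation_eq_zero_of_mem_segment hw)
  · intro u v h u' v' h' hne
    simp only [Path.range_segment]
    have common : ∀ {s a b}, G.Adj s a → G.Adj s b → a ≠ b →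
        segment ℝ (p s) (p a) ∩ segment ℝ (p s) (p b) ⊆ {p s} := fun hsa hsb hab ↦
      segment_inter_segment_subset (hoff hsa _ hsb.ne.symm hab.symm)
    have endpoint : ∀ {s}, s ∈ ({u, v} : Set V) → s ∈ ({u', v'} : Set V) →
        {p s} ⊆ p '' {u, v} ∩ p '' {u', v'} := fun hs hs' ↦
      Set.singleton_subset_iff.mpr ⟨Set.mem_image_of_mem p hs, Set.mem_image_of_mem p hs'⟩
    by_cases huu' : u = u'
    · subst huu'
      exact (common h h' fun hvv' ↦ hne (by rw [hvv'])).trans (endpoint (by simp) (by simp))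
    by_cases huv' : u = v'
    · subst huv'
      rw [segment_symm ℝ (p u')]
      exact (common h h'.symm fun hvu' ↦ hne (by rw [hvu', Set.pair_comm])).trans
        (endpoint (by simp) (by simp))
    by_cases hvu' : v = u'
    · subst hvu'
      rw [segment_symm ℝ (p u)]
      exact (common h.symm h' fun huv' ↦ hne (by rw [huv', Set.pair_comm])).trans
        (endpoint (by simp) (by simp))
    by_cases hvv' : v = v'
    · subst hvv'
      rw [segment_symm ℝ (p u), segment_symm ℝ (p u')]
      exact (common h.symm h'.symm huu').trans (endpoint (by simp) (by simp))
    rw [(hsep h h' huu' huv' hvu' hvv').disjoint.inter_eq]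
    exact Set.empty_subset _

section Transport

variable (G : SimpleGraph V)

lemma transportDist_le_cost {m₁ m₂ : V → ℝ} {A : V → V → ℝ} (hA : IsCoupling m₁ m₂ A) :
    transportDist G m₁ m₂ ≤ ∑ᶠ p : V × V, A p.1 p.2 * G.dist p.1 p.2 := by
  refine csInf_le ⟨0, ?_⟩ ⟨A, hA, rfl⟩
  rintro _ ⟨B, hB, rfl⟩
  exact finsum_nonneg fun p ↦ mul_nonneg (hB.2.1 _ _).1 (Nat.cast_nonneg _)

lemma sum_mul_sub_sum_mul_le_transportDist [Fintype V] {m₁ m₂ : V → ℝ} (f : V → ℝ)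
    (hf : ∀ u v, f u - f v ≤ G.dist u v) (hm : ∃ A, IsCoupling m₁ m₂ A) :
    ∑ u, f u * m₁ u - ∑ u, f u * m₂ u ≤ transportDist G m₁ m₂ := by
  obtain ⟨A₀, hA₀⟩ := hm
  refine le_csInf ⟨_, A₀, hA₀, rfl⟩ ?_
  rintro _ ⟨A, ⟨-, hA, hrow, hcol⟩, rfl⟩
  simp only [finsum_eq_sum_of_fintype] at hrow hcol ⊢
  calc ∑ u, f u * m₁ u - ∑ u, f u * m₂ u = ∑ u, ∑ v, A u v * (f u - f v) := by
        simp only [← hrow, ← hcol, Finset.mul_sum, mul_sub, Finset.sum_sub_distrib]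
        rw [Finset.sum_comm (f := fun v u ↦ f v * A u v)]
        simp only [mul_comm]
    _ ≤ ∑ u, ∑ v, A u v * G.dist u v :=
        Finset.sum_le_sum fun u _ ↦ Finset.sum_le_sum fun v _ ↦
          mul_le_mul_of_nonneg_left (hf u v) (hA u v).1
    _ = ∑ p : V × V, A p.1 p.2 * G.dist p.1 p.2 := (Fintype.sum_prod_type' _).symm

lemma isCoupling_of_sum_eq [Fintype V] {m₁ m₂ : V → ℝ} {A : V → V → ℝ} (hA : ∀ u v, 0 ≤ A u v)
    (hrow : ∀ u, ∑ v, A u v = m₁ u) (hcol : ∀ v, ∑ u, A u v = m₂ v) (hm₁ : ∀ u, m₁ u ≤ 1) :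
    IsCoupling m₁ m₂ A := by
  refine ⟨Set.toFinite _, fun u v ↦ ⟨hA u v, ?_⟩, fun u ↦ ?_, fun v ↦ ?_⟩
  · calc A u v ≤ ∑ w, A u w := Finset.single_le_sum (fun w _ ↦ hA u w) (Finset.mem_univ v)
      _ = m₁ u := hrow u
      _ ≤ 1 := hm₁ u
  · rw [finsum_eq_sum_of_fintype, hrow]
  · rw [finsum_eq_sum_of_fintype, hcol]

lemma transportDist_eq_of_cost_le [Fintype V] {m₁ m₂ : V → ℝ} {A : V → V → ℝ} (f : V → ℝ)
    (hA : IsCoupling m₁ m₂ A) (hf : ∀ u v, f u - f v ≤ G.dist u v)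
    (hcost : ∑ u, ∑ v, A u v * G.dist u v ≤ ∑ u, f u * m₁ u - ∑ u, f u * m₂ u) :
    transportDist G m₁ m₂ = ∑ u, ∑ v, A u v * G.dist u v := by
  have hle := transportDist_le_cost G hA
  rw [finsum_eq_sum_of_fintype, Fintype.sum_prod_type] at hle
  exact le_antisymm hle (hcost.trans (sum_mul_sub_sum_mul_le_transportDist G f hf ⟨A, hA⟩))

end Transport

section LazyWalk

variable (G : SimpleGraph V) [G.LocallyFinite]

lemma lazyWalk_eq_add [DecidableEq V] (α : ℝ) (x v : V) :
    lazyWalk G α x v = α * (if v = x then 1 else 0) + (1 - α) * lazyWalk G 0 x v := by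
  unfold lazyWalk
  split_ifs <;> ring

lemma lazyWalk_le_one {α : ℝ} (h₀ : 0 ≤ α) (h₁ : α ≤ 1) (x v : V) : lazyWalk G α x v ≤ 1 := by
  unfold lazyWalk
  split_ifs with hvx hxv
  · exact h₁
  · have hdeg : (1 : ℝ) ≤ G.degree x := by
      exact_mod_cast (G.degree_pos_iff_exists_adj x).mpr ⟨v, hxv⟩
    exact div_le_one_of_le₀ (by linarith) (by linarith)
  · exact zero_le_one

lemma hasLLYCurv_of_eventually_eq {x y : V} {κ : ℝ}
    (h : ∀ᶠ α in 𝓝[<] 1, alphaRicci G α x y = κ * (1 - α)) : HasLLYCurv G x y κ := by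
  refine tendsto_const_nhds.congr' ?_
  filter_upwards [h, self_mem_nhdsWithin] with α hα hlt
  rw [hα, mul_div_cancel_right₀ _ (sub_ne_zero.mpr (ne_of_lt hlt).symm)]

lemma transportDist_lazyWalk_of_signedCoupling [Fintype V] {x y : V} (hxy : G.Adj x y)
    (π : V → V → ℝ) (f : V → ℝ) (hπ : ∀ u v, (u, v) ≠ (x, y) → 0 ≤ π u v)
    (hrow : ∀ u, ∑ v, π u v = lazyWalk G 0 x u) (hcol : ∀ v, ∑ u, π u v = lazyWalk G 0 y v)
    (hf : ∀ u v, f u - f v ≤ G.dist u v) (hfxy : f x - f y = 1)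
    (hdual : ∑ u, f u * (lazyWalk G 0 x u - lazyWalk G 0 y u) = ∑ u, ∑ v, π u v * G.dist u v)
    {α : ℝ} (hα₀ : 0 ≤ α) (hα₁ : α ≤ 1) (hxy_nonneg : 0 ≤ α + (1 - α) * π x y) :
    transportDist G (lazyWalk G α x) (lazyWalk G α y) =
      α + (1 - α) * ∑ u, ∑ v, π u v * G.dist u v := by
  classical
  set A : V → V → ℝ := fun u v ↦ (if u = x ∧ v = y then α else 0) + (1 - α) * π u v
  have hA : IsCoupling (lazyWalk G α x) (lazyWalk G α y) A := by
    refine isCoupling_of_sum_eq (fun u v ↦ ?_) (fun u ↦ ?_) (fun v ↦ ?_)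
      (lazyWalk_le_one G hα₀ hα₁ x)
    · by_cases huv : u = x ∧ v = y
      · obtain ⟨rfl, rfl⟩ := huv
        simpa [A] using hxy_nonneg
      · have := hπ u v (by simpa using huv)
        simp only [A, if_neg huv]
        nlinarith
    · simp only [A, Finset.sum_add_distrib, ← Finset.mul_sum, hrow, lazyWalk_eq_add G α x u]
      by_cases hu : u = x <;> simp [hu]
    · simp only [A, Finset.sum_add_distrib, ← Finset.mul_sum, hcol, lazyWalk_eq_add G α y v]
      by_cases hv : v = y <;> simp [hv]
  have hcost : ∑ u, ∑ v, A u v * G.dist u v = α + (1 - α) * ∑ u, ∑ v, π u v * G.dist u v := by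
    simp only [A, add_mul, Finset.sum_add_distrib, mul_assoc, ← Finset.mul_sum]
    simp [ite_and, SimpleGraph.dist_eq_one_iff_adj.mpr hxy]
  have hsum : ∀ z, ∑ u, f u * lazyWalk G α z u =
      α * f z + (1 - α) * ∑ u, f u * lazyWalk G 0 z u := by
    intro z
    calc ∑ u, f u * lazyWalk G α z u
        = ∑ u, (α * (f u * if u = z then 1 else 0) + (1 - α) * (f u * lazyWalk G 0 z u)) :=
          Finset.sum_congr rfl fun u _ ↦ by rw [lazyWalk_eq_add G α z]; ring
      _ = α * f z + (1 - α) * ∑ u, f u * lazyWalk G 0 z u := by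
          simp [Finset.sum_add_distrib, ← Finset.mul_sum]
  simp only [mul_sub, Finset.sum_sub_distrib] at hdual
  refine (transportDist_eq_of_cost_le G f hA hf (le_of_eq ?_)).trans hcost
  rw [hcost, hsum, hsum]
  linear_combination (-α) * hfxy - (1 - α) * hdual

theorem hasLLYCurv_of_signedCoupling [Fintype V] {x y : V} (hxy : G.Adj x y)
    (π : V → V → ℝ) (f : V → ℝ) (hπ : ∀ u v, (u, v) ≠ (x, y) → 0 ≤ π u v)
    (hrow : ∀ u, ∑ v, π u v = lazyWalk G 0 x u) (hcol : ∀ v, ∑ u, π u v = lazyWalk G 0 y v)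
    (hf : ∀ u v, f u - f v ≤ G.dist u v) (hfxy : f x - f y = 1)
    (hdual : ∑ u, f u * (lazyWalk G 0 x u - lazyWalk G 0 y u) = ∑ u, ∑ v, π u v * G.dist u v) :
    HasLLYCurv G x y (1 - ∑ u, ∑ v, π u v * G.dist u v) := by
  have hlim : Tendsto (fun α : ℝ ↦ α + (1 - α) * π x y) (𝓝[<] 1) (𝓝 1) := by
    have : Continuous fun α : ℝ ↦ α + (1 - α) * π x y := by fun_prop
    simpa using (this.tendsto 1).mono_left nhdsWithin_le_nhds
  apply hasLLYCurv_of_eventually_eq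
  filter_upwards [hlim.eventually_const_lt zero_lt_one, Ioo_mem_nhdsLT zero_lt_one]
    with α hxy_pos ⟨hα₀, hα₁⟩
  rw [alphaRicci, transportDist_lazyWalk_of_signedCoupling G hxy π f hπ hrow hcol hf hfxy hdual
    hα₀.le hα₁.le hxy_pos.le, SimpleGraph.dist_eq_one_iff_adj.mpr hxy]
  ring

end LazyWalk

section Symmetry

variable {W : Type*} {G : SimpleGraph V} {G' : SimpleGraph W}

lemma SimpleGraph.Hom.edist_le (φ : G →g G') (u v : V) : G'.edist (φ u) (φ v) ≤ G.edist u v := by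
  rw [SimpleGraph.edist_eq_sInf (G := G)]
  refine le_sInf ?_
  rintro _ ⟨w, rfl⟩
  simpa using SimpleGraph.edist_le (w.map φ)

lemma SimpleGraph.Iso.dist_eq (φ : G ≃g G') (u v : V) : G'.dist (φ u) (φ v) = G.dist u v := by
  have h := φ.symm.toHom.edist_le (φ u) (φ v)
  simp only [RelIso.coe_toRelEmbedding, RelEmbedding.coe_toRelHom, RelIso.symm_apply_apply] at h
  exact congrArg ENat.toNat (le_antisymm (φ.toHom.edist_le u v) h)

lemma IsCoupling.comp_equiv {m₁ m₂ : V → ℝ} {A : V → V → ℝ} (h : IsCoupling m₁ m₂ A) (e : W ≃ V) :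
    IsCoupling (m₁ ∘ e) (m₂ ∘ e) fun u v ↦ A (e u) (e v) := by
  obtain ⟨hfin, hA, hrow, hcol⟩ := h
  exact ⟨hfin.preimage (e.injective.prodMap e.injective).injOn,
    fun u v ↦ hA _ _, fun u ↦ (finsum_comp_equiv e).trans (hrow (e u)),
    fun v ↦ (finsum_comp_equiv e (f := fun x ↦ A x (e v))).trans (hcol (e v))⟩

lemma IsCoupling.swap {m₁ m₂ : V → ℝ} {A : V → V → ℝ} (h : IsCoupling m₁ m₂ A) :
    IsCoupling m₂ m₁ fun u v ↦ A v u := by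
  obtain ⟨hfin, hA, hrow, hcol⟩ := h
  exact ⟨hfin.preimage Prod.swap_injective.injOn, fun u v ↦ hA v u, hcol, hrow⟩

def transportCosts (G : SimpleGraph V) (m₁ m₂ : V → ℝ) : Set ℝ :=
  {w | ∃ A, IsCoupling m₁ m₂ A ∧ w = ∑ᶠ p : V × V, A p.1 p.2 * (G.dist p.1 p.2 : ℝ)}

lemma transportDist_eq_sInf (m₁ m₂ : V → ℝ) :
    transportDist G m₁ m₂ = sInf (transportCosts G m₁ m₂) := rfl

lemma transportCosts_subset_swap (m₁ m₂ : V → ℝ) :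
    transportCosts G m₁ m₂ ⊆ transportCosts G m₂ m₁ := by
  rintro _ ⟨A, hA, rfl⟩
  refine ⟨_, hA.swap, ?_⟩
  rw [← finsum_comp_equiv (Equiv.prodComm V V)]
  simp [SimpleGraph.dist_comm]

lemma transportDist_comm (m₁ m₂ : V → ℝ) :
    transportDist G m₁ m₂ = transportDist G m₂ m₁ := by
  simp only [transportDist_eq_sInf]
  rw [(transportCosts_subset_swap m₁ m₂).antisymm (transportCosts_subset_swap m₂ m₁)]

lemma transportCosts_subset_iso (φ : G ≃g G') (m₁ m₂ : V → ℝ) :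
    transportCosts G m₁ m₂ ⊆ transportCosts G' (m₁ ∘ φ.symm) (m₂ ∘ φ.symm) := by
  rintro _ ⟨A, hA, rfl⟩
  refine ⟨_, hA.comp_equiv φ.symm.toEquiv, ?_⟩
  rw [← finsum_comp_equiv (φ.toEquiv.prodCongr φ.toEquiv)]
  simp [φ.dist_eq]

lemma transportDist_iso (φ : G ≃g G') (m₁ m₂ : V → ℝ) :
    transportDist G' (m₁ ∘ φ.symm) (m₂ ∘ φ.symm) = transportDist G m₁ m₂ := by
  have h := transportCosts_subset_iso φ.symm (m₁ ∘ φ.symm) (m₂ ∘ φ.symm)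
  simp only [RelIso.symm_symm, Function.comp_assoc, RelIso.symm_comp_self, Function.comp_id] at h
  simp only [transportDist_eq_sInf]
  rw [h.antisymm (transportCosts_subset_iso φ m₁ m₂)]

lemma HasLLYCurv.symm [G.LocallyFinite] {x y : V} {κ : ℝ} (h : HasLLYCurv G x y κ) :
    HasLLYCurv G y x κ := by
  simpa only [HasLLYCurv, alphaRicci, transportDist_comm (G := G) (lazyWalk G _ x),
    SimpleGraph.dist_comm (u := x)] using h

lemma lazyWalk_iso [G.LocallyFinite] [G'.LocallyFinite] (φ : G ≃g G') (α : ℝ) (x : V) :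
    lazyWalk G' α (φ x) = lazyWalk G α x ∘ φ.symm := by
  ext v
  obtain ⟨v, rfl⟩ := φ.surjective v
  rw [Function.comp_apply, RelIso.symm_apply_apply]
  unfold lazyWalk
  rw [φ.injective.eq_iff, φ.map_adj_iff, φ.degree_eq]

lemma HasLLYCurv.iso [G.LocallyFinite] [G'.LocallyFinite] (φ : G ≃g G') {x y : V} {κ : ℝ}
    (h : HasLLYCurv G x y κ) : HasLLYCurv G' (φ x) (φ y) κ := by
  simpa only [HasLLYCurv, alphaRicci, lazyWalk_iso, transportDist_iso, φ.dist_eq] using h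

theorem positivelyCurved_of_edge_orbits [G.LocallyFinite] (R : Set (V × V))
    (hR : ∀ r ∈ R, ∃ κ, 0 < κ ∧ HasLLYCurv G r.1 r.2 κ)
    (horbit : ∀ x y, G.Adj x y → ∃ φ : G ≃g G, ∃ r ∈ R,
      (φ r.1 = x ∧ φ r.2 = y) ∨ (φ r.1 = y ∧ φ r.2 = x)) :
    PositivelyCurved G := by
  intro x y hxy
  obtain ⟨φ, r, hr, ⟨rfl, rfl⟩ | ⟨rfl, rfl⟩⟩ := horbit x y hxy <;>
    obtain ⟨κ, hκ, h⟩ := hR r hr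
  · exact ⟨κ, hκ, h.iso φ⟩
  · exact ⟨κ, hκ, (h.iso φ).symm⟩

end Symmetry

section Certificate

variable (G : SimpleGraph V) [Fintype V] [DecidableRel G.Adj]

lemma SimpleGraph.degree_eq_card_filter [G.LocallyFinite] (x : V) :
    G.degree x = #{w | G.Adj x w} := by
  rw [← G.card_neighborFinset_eq_degree]
  congr 1
  ext w
  simp

def simpleWalkRat (x u : V) : ℚ :=
  if G.Adj x u then 1 / #{w | G.Adj x w} else 0

lemma lazyWalk_zero_eq_simpleWalkRat [G.LocallyFinite] (x u : V) :
    lazyWalk G 0 x u = simpleWalkRat G x u := by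
  unfold lazyWalk simpleWalkRat
  by_cases hux : u = x
  · subst hux
    simp
  · simp only [hux, if_false, G.degree_eq_card_filter]
    split_ifs <;> simp

def IsCurvatureCertificate (d : V → V → ℕ) (x y : V) (π : V → V → ℚ) (f : V → ℚ) : Prop :=
  (∀ u v, (u, v) ≠ (x, y) → 0 ≤ π u v) ∧
  (∀ u, ∑ v, π u v = simpleWalkRat G x u) ∧ (∀ v, ∑ u, π u v = simpleWalkRat G y v) ∧
  (∀ u v, f u - f v ≤ d u v) ∧ f x - f y = 1 ∧
  ∑ u, f u * (simpleWalkRat G x u - simpleWalkRat G y u) = ∑ u, ∑ v, π u v * d u v ∧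
  ∑ u, ∑ v, π u v * d u v < 1

instance [DecidableEq V] (d : V → V → ℕ) (x y : V) (π : V → V → ℚ) (f : V → ℚ) :
    Decidable (IsCurvatureCertificate G d x y π f) := by
  unfold IsCurvatureCertificate; infer_instance

variable {G} in
theorem IsCurvatureCertificate.exists_pos_hasLLYCurv [G.LocallyFinite] {d : V → V → ℕ}
    (hd : ∀ u v, G.dist u v = d u v) {x y : V} (hxy : G.Adj x y) {π : V → V → ℚ} {f : V → ℚ}
    (h : IsCurvatureCertificate G d x y π f) : ∃ κ, 0 < κ ∧ HasLLYCurv G x y κ := by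
  obtain ⟨hπ, hrow, hcol, hf, hfxy, hdual, hlt⟩ := h
  refine ⟨_, ?_, hasLLYCurv_of_signedCoupling G hxy (fun u v ↦ π u v) (fun u ↦ f u)
    (fun u v huv ↦ by exact_mod_cast hπ u v huv) (fun u ↦ ?_) (fun v ↦ ?_) (fun u v ↦ ?_)
    (by exact_mod_cast hfxy) ?_⟩
  · simp only [hd]
    exact_mod_cast sub_pos.mpr hlt
  · rw [lazyWalk_zero_eq_simpleWalkRat]
    exact_mod_cast hrow u
  · rw [lazyWalk_zero_eq_simpleWalkRat]
    exact_mod_cast hcol v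
  · rw [hd]
    exact_mod_cast hf u v
  · simp only [lazyWalk_zero_eq_simpleWalkRat, hd]
    exact_mod_cast hdual

end Certificate

lemma SimpleGraph.dist_eq_of_forall_adj [DecidableEq V] (G : SimpleGraph V) [DecidableRel G.Adj]
    {z : V} (hz : ∀ v, v ≠ z → G.Adj z v) (u v : V) :
    G.dist u v = if u = v then 0 else if G.Adj u v then 1 else 2 := by
  split_ifs with huv hadj
  · simp [huv]
  · exact SimpleGraph.dist_eq_one_iff_adj.mpr hadj
  · have hu : u ≠ z := fun h ↦ hadj (h ▸ hz v (h ▸ Ne.symm huv))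
    have hv : v ≠ z := fun h ↦ hadj (h ▸ (hz u (h ▸ huv)).symm)
    have h2 : G.edist u v = 2 := SimpleGraph.edist_eq_two_iff.mpr
      ⟨huv, hadj, z, by simpa using ⟨(hz u hu).symm, (hz v hv).symm⟩⟩
    simp [SimpleGraph.dist, h2]

def sparseMatrix {α : Type*} [DecidableEq α] (l : List (α × α × ℚ)) (u v : α) : ℚ :=
  ((l.filter fun e ↦ e.1 = u ∧ e.2.1 = v).map fun e ↦ e.2.2).sum

def extremalAdj : Option (ZMod 16) → Option (ZMod 16) → Bool
  | none, none => false
  | none, some _ => true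
  | some _, none => true
  | some i, some j =>
    j - i = 1 || i - j = 1 || (i.val % 2 = 0 && (j - i = 2 || i - j = 2)) ||
      (i.val % 4 = 0 && (j - i = 4 || i - j = 4))

lemma extremalGraph_adj_iff (u v : Option (ZMod 16)) : extremalGraph.Adj u v ↔ extremalAdj u v := by
  revert u v
  simp only [extremalGraph, SimpleGraph.fromRel_adj]
  decide

instance : DecidableRel extremalGraph.Adj := fun u v ↦
  decidable_of_iff _ (extremalGraph_adj_iff u v).symm

lemma extremalGraph_dist (u v : Option (ZMod 16)) :
    extremalGraph.dist u v = if u = v then 0 else if extremalGraph.Adj u v then 1 else 2 :=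
  extremalGraph.dist_eq_of_forall_adj (z := none) (by decide) u v

def extremalRotation : extremalGraph ≃g extremalGraph :=
  ⟨Equiv.optionCongr (Equiv.addRight 4), by decide⟩

def extremalReflection : extremalGraph ≃g extremalGraph :=
  ⟨Equiv.optionCongr (Equiv.neg _), by decide⟩

def extremalSymmetries : List (extremalGraph ≃g extremalGraph) :=
  (List.range 4).flatMap fun k ↦ [extremalRotation ^ k, extremalRotation ^ k * extremalReflection]

def vertexIndex (v : Option (ZMod 16)) : ℕ := v.elim 0 (·.val + 1)

-- Each entry: an edge `(x, y)`, the signed plan `π` as a sparse list, and `f` at `z, y₀, …, y₁₅`.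
def extremalCertificates :
    List ((Option (ZMod 16) × Option (ZMod 16)) × List (Option (ZMod 16) × Option (ZMod 16) × ℚ) ×
      List ℚ) := [
    ((none, some 0),
      [(none, none, 1/7), (none, some 0, -1/7), (some 0, some 0, 1/16), (some 1, some 1, 1/16),
       (some 2, some 2, 1/16), (some 3, some 2, 1/16), (some 4, some 4, 1/16),
       (some 5, some 4, 1/16), (some 6, some 0, 5/112), (some 6, some 4, 1/56),
       (some 7, some 0, 1/28), (some 7, some 1, 3/112), (some 8, some 12, 1/16),
       (some 9, some 1, 3/56), (some 9, some 2, 1/112), (some 10, some 2, 1/112),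
       (some 10, some 12, 1/56), (some 10, some 14, 1/56), (some 10, some 15, 1/56),
       (some 11, some 15, 1/16), (some 12, some 12, 1/16), (some 13, some 14, 1/16),
       (some 14, some 14, 1/16), (some 15, some 15, 1/16)],
      [1, 0, 0, 0, 1, 1, 2, 2, 2, 2, 2, 2, 2, 1, 1, 0, 0]),
    ((none, some 1),
      [(none, none, 1/3), (none, some 0, 1/12), (none, some 1, -5/12), (some 0, some 0, 1/16),
       (some 1, some 1, 1/16), (some 2, some 2, 1/16), (some 3, some 2, 1/16),
       (some 4, some 2, 1/16), (some 5, some 1, 1/16), (some 6, some 1, 1/16),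
       (some 7, some 1, 1/16), (some 8, some 1, 1/16), (some 9, some 1, 1/16),
       (some 10, some 1, 1/24), (some 10, some 2, 1/48), (some 11, some 2, 1/16),
       (some 12, some 0, 1/16), (some 13, some 2, 1/16), (some 14, some 0, 1/16),
       (some 15, some 0, 1/16)],
      [1, 0, 0, 0, 1, 1, 2, 2, 2, 2, 2, 2, 2, 1, 2, 1, 1]),
    ((none, some 2),
      [(none, none, 1/5), (none, some 1, 11/80), (none, some 2, -27/80), (some 0, some 0, 1/16),
       (some 1, some 1, 1/16), (some 2, some 2, 1/16), (some 3, some 3, 1/16),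
       (some 4, some 4, 1/16), (some 5, some 4, 1/16), (some 6, some 4, 1/16),
       (some 7, some 2, 1/16), (some 8, some 2, 1/20), (some 8, some 4, 1/80),
       (some 9, some 2, 1/16), (some 10, some 2, 1/16), (some 11, some 2, 3/80),
       (some 11, some 3, 1/40), (some 12, some 0, 1/16), (some 13, some 3, 1/16),
       (some 14, some 0, 1/16), (some 15, some 0, 1/80), (some 15, some 3, 1/20)],
      [1, 1, 0, 0, 0, 1, 2, 2, 2, 2, 2, 2, 2, 2, 2, 2, 2]),
    ((some 0, some 1),
      [(none, none, 1/7), (some 0, some 0, 1/3), (some 0, some 1, -1/3), (some 1, some 1, 1/7),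
       (some 2, some 2, 1/7), (some 4, some 2, 1/7), (some 12, none, 1/7), (some 14, none, 1/21),
       (some 14, some 1, 2/21), (some 15, some 1, 2/21), (some 15, some 2, 1/21)],
      [1, 1, 0, 0, 1, 1, 1, 1, 1, 1, 1, 1, 1, 2, 1, 2, 2]),
    ((some 1, some 2),
      [(none, none, 1/5), (none, some 3, 2/15), (some 0, some 0, 1/5), (some 0, some 4, 2/15),
       (some 1, some 1, 1/5), (some 1, some 2, -1/3), (some 1, some 3, 1/15),
       (some 1, some 4, 1/15), (some 2, some 2, 1/3)],
      [1, 1, 2, 1, 0, 0, 1, 1, 1, 1, 1, 1, 1, 1, 1, 1, 1]),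
    ((some 0, some 2),
      [(none, none, 1/7), (some 0, some 0, 1/5), (some 0, some 1, 2/35), (some 0, some 2, -9/35),
       (some 1, some 1, 1/7), (some 2, some 2, 1/7), (some 4, some 4, 1/7), (some 12, none, 2/35),
       (some 12, some 2, 3/35), (some 14, some 2, 1/35), (some 14, some 3, 4/35),
       (some 15, some 3, 3/35), (some 15, some 4, 2/35)],
      [1, 1, 0, 0, 0, 0, 1, 1, 1, 1, 1, 1, 1, 2, 1, 2, 2]),
    ((some 0, some 4),
      [(none, none, 1/7), (some 0, some 0, 1/7), (some 0, some 4, -1/7), (some 1, some 3, 1/7),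
       (some 2, some 2, 1/7), (some 4, some 4, 1/7), (some 12, some 8, 1/7),
       (some 14, some 5, 1/7), (some 15, some 6, 1/7)],
      [1, 1, 2, 1, 0, 0, 0, 0, 1, 0, 1, 1, 1, 1, 1, 2, 2])]

lemma extremalCertificates_valid : ∀ c ∈ extremalCertificates,
    extremalGraph.Adj c.1.1 c.1.2 ∧
    IsCurvatureCertificate extremalGraph
      (fun u v ↦ if u = v then 0 else if extremalGraph.Adj u v then 1 else 2) c.1.1 c.1.2
      (sparseMatrix c.2.1) (fun v ↦ c.2.2.getD (vertexIndex v) 0) := by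
  decide +kernel

lemma extremalGraph_edge_orbits : ∀ x y, extremalGraph.Adj x y →
    ∃ φ ∈ extremalSymmetries, ∃ c ∈ extremalCertificates,
      (φ c.1.1 = x ∧ φ c.1.2 = y) ∨ (φ c.1.1 = y ∧ φ c.1.2 = x) := by
  decide +kernel

theorem positivelyCurved_extremalGraph : PositivelyCurved extremalGraph := by
  refine positivelyCurved_of_edge_orbits {r | ∃ c ∈ extremalCertificates, c.1 = r} ?_ ?_
  · rintro _ ⟨c, hc, rfl⟩
    obtain ⟨hadj, hcert⟩ := extremalCertificates_valid c hc
    exact hcert.exists_pos_hasLLYCurv extremalGraph_dist hadj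
  · intro x y hxy
    obtain ⟨φ, -, c, hc, h⟩ := extremalGraph_edge_orbits x y hxy
    exact ⟨φ, c.1, ⟨c, hc, rfl⟩, h⟩

def extremalPosition : Option (ZMod 16) → ℤ × ℤ
  | none => (0, 0)
  | some i => [(100, 0), (51, 22), (45, 48), (19, 53), (-5, 100), (-25, 50), (-50, 43), (-53, 17),
      (-99, -10), (-49, -27), (-40, -52), (-14, -54), (16, -99), (30, -47), (54, -37),
      (55, -11)].getD i.val 0

lemma extremalPosition_injective : Function.Injective extremalPosition := by
  decide +kernel

lemma extremalPosition_orientation_ne_zero : ∀ u v, extremalGraph.Adj u v → ∀ w, w ≠ u → w ≠ v →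
    orientation (extremalPosition u) (extremalPosition v) (extremalPosition w) ≠ 0 := by
  decide +kernel

lemma extremalPosition_segmentsSeparated : ∀ u v, extremalGraph.Adj u v →
    ∀ u' v', extremalGraph.Adj u' v' → u ≠ u' → u ≠ v' → v ≠ u' → v ≠ v' →
    SegmentsSeparated (extremalPosition u) (extremalPosition v) (extremalPosition u')
      (extremalPosition v') := by
  decide +kernel

theorem isPlanar_extremalGraph : IsPlanar extremalGraph := by
  refine isPlanar_of_straightLineDrawing _ (castPoint ∘ extremalPosition)
    (castPoint_injective.comp extremalPosition_injective) (fun u v h w hwu hwv ↦ ?_)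
    (fun u v h u' v' h' h₁ h₂ h₃ h₄ ↦
      (extremalPosition_segmentsSeparated u v h u' v' h' h₁ h₂ h₃ h₄).castPoint)
  simp only [Function.comp_apply, orientation_castPoint]
  exact_mod_cast extremalPosition_orientation_ne_zero u v h w hwu hwv

/-- The 17-vertex graph above is a simple planar graph with minimum degree at least 3
and maximum degree 16, which is positively curved in the Lin–Lu–Yau sense. -/
theorem extremalGraph_properties :
    IsPlanar extremalGraph ∧
    (∀ u, 3 ≤ extremalGraph.degree u) ∧
    (∀ u, extremalGraph.degree u ≤ 16) ∧
    (∃ u, extremalGraph.degree u = 16) ∧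
    PositivelyCurved extremalGraph := by
  refine ⟨isPlanar_extremalGraph, fun u ↦ ?_, fun u ↦ ?_, ⟨none, ?_⟩,
    positivelyCurved_extremalGraph⟩
  · rw [extremalGraph.degree_eq_card_filter]
    revert u
    decide
  · rw [extremalGraph.degree_eq_card_filter]
    revert u
    decide
  · rw [extremalGraph.degree_eq_card_filter]
    decide
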